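/- arXiv:0901.2118 — 2 statements merged into one kernel-verified Lean document; each statement's English description precedes it below -/
import Mathlib

section
/- Let Φ₀, Φ₁ be channels from m×m matrices to k×k matrices and let σ be a separable bipartite state on ℂ^m ⊗ ℂ^n. Then ‖((Φ₀ − Φ₁) ⊗ id_n)[σ]‖_tr ≤ sup { ‖Φ₀[τ] − Φ₁[τ]‖_tr : τ a state on ℂ^m }. -/
/-!
Write `σ = ∑ pᵢ ρᵢ ⊗ τᵢ`, so that `((Φ₀ − Φ₁) ⊗ id)[σ] = ∑ pᵢ Xᵢ ⊗ τᵢ` with the Hermitian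
`Xᵢ = Φ₀[ρᵢ] − Φ₁[ρᵢ]`. Splitting `Xᵢ = Xᵢ⁺ − Xᵢ⁻` exhibits this matrix as a difference of two
positive matrices of traces `∑ pᵢ tr Xᵢ⁺` and `∑ pᵢ tr Xᵢ⁻`. The trace norm of a difference of
positive matrices is at most the sum of their traces, and `‖Xᵢ‖_tr = tr Xᵢ⁺ + tr Xᵢ⁻`, so the
left-hand side is at most the convex combination `∑ pᵢ ‖Xᵢ‖_tr` of values in the set.
-/

open scoped Kronecker ComplexOrder Matrix

namespace ChannelDiscrimination

/-- The trace norm `Tr √(Aᴴ A)` of a complex square matrix. -/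
noncomputable def traceNorm {ι : Type*} [Fintype ι] [DecidableEq ι]
    (A : Matrix ι ι ℂ) : ℝ :=
  ((Matrix.posSemidef_conjTranspose_mul_self A).1.eigenvectorUnitary.1 *
    Matrix.diagonal (((↑) : ℝ → ℂ) ∘ (√·) ∘ (Matrix.posSemidef_conjTranspose_mul_self A).1.eigenvalues) *
    (star (Matrix.posSemidef_conjTranspose_mul_self A).1.eigenvectorUnitary :
      Matrix ι ι ℂ)).trace.re

/-- A state: a positive semidefinite matrix of trace one. -/
def IsState {ι : Type*} [Fintype ι] (ρ : Matrix ι ι ℂ) : Prop :=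
  ρ.PosSemidef ∧ ρ.trace = 1

/-- Separability of a bipartite matrix on `ℂ^m ⊗ ℂ^n`. -/
def IsSeparable {m n : ℕ} (σ : Matrix (Fin m × Fin n) (Fin m × Fin n) ℂ) : Prop :=
  ∃ (N : ℕ) (p : Fin N → ℝ) (ρ : Fin N → Matrix (Fin m) (Fin m) ℂ)
    (τ : Fin N → Matrix (Fin n) (Fin n) ℂ),
    (∀ i, 0 ≤ p i) ∧ (∑ i, p i = 1) ∧ (∀ i, IsState (ρ i)) ∧ (∀ i, IsState (τ i)) ∧
    σ = ∑ i, (p i : ℂ) • (ρ i ⊗ₖ τ i)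

/-- `Φ ⊗ id_n` for a super-operator `Φ` from `m×m` to `k×k` matrices. -/
def tensorId {m k : ℕ} (n : ℕ)
    (Φ : Matrix (Fin m) (Fin m) ℂ →ₗ[ℂ] Matrix (Fin k) (Fin k) ℂ) :
    Matrix (Fin m × Fin n) (Fin m × Fin n) ℂ →ₗ[ℂ]
      Matrix (Fin k × Fin n) (Fin k × Fin n) ℂ where
  toFun M := Matrix.of fun p q => Φ (Matrix.of fun i j => M (i, p.2) (j, q.2)) p.1 q.1
  map_add' M N := by
    ext p q
    show Φ ((Matrix.of fun i j => M (i, p.2) (j, q.2)) +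
        (Matrix.of fun i j => N (i, p.2) (j, q.2))) p.1 q.1 = _
    rw [map_add]
    rfl
  map_smul' c M := by
    ext p q
    show Φ (c • (Matrix.of fun i j => M (i, p.2) (j, q.2))) p.1 q.1 = _
    rw [map_smul]
    rfl

/-- A positive super-operator. -/
def IsPositiveMap {m k : ℕ}
    (Φ : Matrix (Fin m) (Fin m) ℂ →ₗ[ℂ] Matrix (Fin k) (Fin k) ℂ) : Prop :=
  ∀ X : Matrix (Fin m) (Fin m) ℂ, X.PosSemidef → (Φ X).PosSemidef

/-- A trace-preserving super-operator. -/
def IsTracePreserving {m k : ℕ}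
    (Φ : Matrix (Fin m) (Fin m) ℂ →ₗ[ℂ] Matrix (Fin k) (Fin k) ℂ) : Prop :=
  ∀ X : Matrix (Fin m) (Fin m) ℂ, (Φ X).trace = X.trace

/-- A completely positive super-operator: `Φ ⊗ id_n` is positive for every `n`. -/
def IsCompletelyPositive {m k : ℕ}
    (Φ : Matrix (Fin m) (Fin m) ℂ →ₗ[ℂ] Matrix (Fin k) (Fin k) ℂ) : Prop :=
  ∀ (n : ℕ) (M : Matrix (Fin m × Fin n) (Fin m × Fin n) ℂ),
    M.PosSemidef → (tensorId n Φ M).PosSemidef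

/-- A (quantum) channel: completely positive and trace-preserving. -/
def IsChannel {m k : ℕ}
    (Φ : Matrix (Fin m) (Fin m) ℂ →ₗ[ℂ] Matrix (Fin k) (Fin k) ℂ) : Prop :=
  IsCompletelyPositive Φ ∧ IsTracePreserving Φ

/-- An entanglement-breaking channel. -/
def IsEntanglementBreaking {m k : ℕ}
    (Φ : Matrix (Fin m) (Fin m) ℂ →ₗ[ℂ] Matrix (Fin k) (Fin k) ℂ) : Prop :=
  IsChannel Φ ∧ ∀ (n : ℕ) (ρ : Matrix (Fin m × Fin n) (Fin m × Fin n) ℂ),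
    IsState ρ → IsSeparable (tensorId n Φ ρ)

/-- `pad1 M c` is the `(k+1)×(k+1)` matrix with `M` as its top-left `k×k` block,
`c` in the bottom-right corner, and zeros elsewhere. -/
def pad1 {k : ℕ} (M : Matrix (Fin k) (Fin k) ℂ) (c : ℂ) :
    Matrix (Fin (k + 1)) (Fin (k + 1)) ℂ :=
  Matrix.of fun a b =>
    Fin.lastCases (Fin.lastCases c (fun _ => 0) b)
      (fun i => Fin.lastCases 0 (fun j => M i j) b) a

/-- Partial transpose on the first tensor factor. -/
def ptransposeFst {d n : ℕ} (ρ : Matrix (Fin d × Fin n) (Fin d × Fin n) ℂ) :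
    Matrix (Fin d × Fin n) (Fin d × Fin n) ℂ :=
  Matrix.of fun p q => ρ (q.1, p.2) (p.1, q.2)

open scoped MatrixOrder

section TraceNorm

variable {ι : Type*} [Fintype ι] [DecidableEq ι]

theorem traceNorm_eq_trace_abs (A : Matrix ι ι ℂ) : traceNorm A = (CFC.abs A).trace.re := by
  have hAA := Matrix.posSemidef_conjTranspose_mul_self A
  rw [CFC.abs, Matrix.star_eq_conjTranspose, CFC.sqrt_eq_real_sqrt _ hAA.nonneg, cfcₙ_eq_cfc,
    hAA.1.cfc_eq, Matrix.IsHermitian.cfc, Unitary.conjStarAlgAut_apply]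
  rfl

theorem traceNorm_eq_trace_posPart_add_trace_negPart {X : Matrix ι ι ℂ} (hX : X.IsHermitian) :
    traceNorm X = (X⁺).trace.re + (X⁻).trace.re := by
  rw [traceNorm_eq_trace_abs, ← CFC.posPart_add_negPart X hX.isSelfAdjoint, Matrix.trace_add,
    Complex.add_re]

omit [DecidableEq ι] in
theorem trace_re_projection_mul_nonneg {J M : Matrix ι ι ℂ} (hJ : J.IsHermitian)
    (hJJ : J * J = J) (hM : M.PosSemidef) : 0 ≤ (J * M).trace.re := by
  rw [← hJJ, Matrix.mul_assoc, Matrix.trace_mul_comm, Matrix.mul_assoc]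
  simpa [hJ.eq, Matrix.mul_assoc] using
    (Complex.nonneg_iff.mp (hM.mul_mul_conjTranspose_same J).trace_nonneg).1

theorem trace_re_projection_mul_le {J M : Matrix ι ι ℂ} (hJ : J.IsHermitian)
    (hJJ : J * J = J) (hM : M.PosSemidef) : (J * M).trace.re ≤ M.trace.re := by
  have hJ' : (1 - J) * (1 - J) = 1 - J := by
    simp [Matrix.sub_mul, Matrix.mul_sub, hJJ]
  have := trace_re_projection_mul_nonneg (Matrix.isHermitian_one.sub hJ) hJ' hM
  rw [Matrix.sub_mul, Matrix.one_mul, Matrix.trace_sub, Complex.sub_re] at this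
  linarith

theorem exists_projection_mul_eq_neg_negPart {X : Matrix ι ι ℂ} (hX : X.IsHermitian) :
    ∃ J : Matrix ι ι ℂ, J.IsHermitian ∧ J * J = J ∧ J * X = -X⁻ := by
  have hcont (f : ℝ → ℝ) : ContinuousOn f (spectrum ℝ X) := X.finite_real_spectrum.continuousOn f
  set j : ℝ → ℝ := fun x => if x < 0 then 1 else 0
  refine ⟨cfc j X, cfc_predicate j X, ?_, ?_⟩
  · rw [← cfc_mul j j X (hcont j) (hcont j)]
    exact cfc_congr fun x _ => by by_cases hx : x < 0 <;> simp [j, hx]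
  · have hmul := cfc_mul j (fun x => x) X (hcont j) (hcont _)
    rw [cfc_id' ℝ X hX.isSelfAdjoint] at hmul
    rw [← hmul, CFC.negPart_def, cfcₙ_eq_cfc, ← cfc_neg]
    exact cfc_congr fun x _ => by
      by_cases hx : x < 0
      · simp [j, hx, negPart_eq_neg.mpr hx.le]
      · simp [j, hx, negPart_eq_zero.mpr (not_lt.mp hx)]

/-- With `J` the projection onto the negative spectral subspace of `P - Q`,
`‖P - Q‖_tr = tr (P - Q) + 2 tr (P - Q)⁻` and `tr (P - Q)⁻ = tr (J Q) - tr (J P) ≤ tr Q`. -/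
theorem traceNorm_sub_le {P Q : Matrix ι ι ℂ} (hP : P.PosSemidef) (hQ : Q.PosSemidef) :
    traceNorm (P - Q) ≤ P.trace.re + Q.trace.re := by
  have hX := hP.1.sub hQ.1
  obtain ⟨J, hJ, hJJ, hJX⟩ := exists_projection_mul_eq_neg_negPart hX
  have habs : CFC.abs (P - Q) = P - Q + 2 • (P - Q)⁻ :=
    eq_add_of_sub_eq' (CFC.abs_sub_self _ hX.isSelfAdjoint)
  have hneg : ((P - Q)⁻).trace.re = (J * Q).trace.re - (J * P).trace.re := by
    rw [← neg_neg (P - Q)⁻, ← hJX]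
    simp [Matrix.mul_sub]
  have hJP := trace_re_projection_mul_nonneg hJ hJJ hP
  have hJQ := trace_re_projection_mul_le hJ hJJ hQ
  rw [traceNorm_eq_trace_abs, habs]
  simp only [Matrix.trace_add, Matrix.trace_sub, Complex.add_re,
    Complex.sub_re, two_nsmul] at hneg ⊢
  linarith

end TraceNorm

theorem sub_kronecker {α l m l' m' : Type*} [Ring α] (A B : Matrix l m α) (C : Matrix l' m' α) :
    (A - B) ⊗ₖ C = A ⊗ₖ C - B ⊗ₖ C := by
  ext
  simp [sub_mul]

section Kronecker

variable {κ ι ι' : Type*} [Fintype κ] [Fintype ι] [Fintype ι']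

theorem posSemidef_sum_smul_kronecker {p : κ → ℝ} (hp : ∀ i, 0 ≤ p i)
    {M : κ → Matrix ι ι ℂ} (hM : ∀ i, (M i).PosSemidef)
    {τ : κ → Matrix ι' ι' ℂ} (hτ : ∀ i, (τ i).PosSemidef) :
    (∑ i, (p i : ℂ) • (M i ⊗ₖ τ i)).PosSemidef :=
  Matrix.posSemidef_sum _ fun i _ =>
    ((hM i).kronecker (hτ i)).smul (Complex.zero_le_real.mpr (hp i))

theorem trace_re_sum_smul_kronecker (p : κ → ℝ) (M : κ → Matrix ι ι ℂ)
    {τ : κ → Matrix ι' ι' ℂ} (hτ : ∀ i, IsState (τ i)) :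
    (∑ i, (p i : ℂ) • (M i ⊗ₖ τ i)).trace.re = ∑ i, p i * (M i).trace.re := by
  simp [Matrix.trace_sum, Matrix.trace_kronecker, (hτ _).2, Complex.re_sum]

variable [DecidableEq ι] [DecidableEq ι']

theorem traceNorm_sum_smul_kronecker_le {p : κ → ℝ} (hp : ∀ i, 0 ≤ p i)
    {X : κ → Matrix ι ι ℂ} (hX : ∀ i, (X i).IsHermitian)
    {τ : κ → Matrix ι' ι' ℂ} (hτ : ∀ i, IsState (τ i)) :
    traceNorm (∑ i, (p i : ℂ) • (X i ⊗ₖ τ i)) ≤ ∑ i, p i * traceNorm (X i) := by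
  have hsplit : ∑ i, (p i : ℂ) • (X i ⊗ₖ τ i) =
      ∑ i, (p i : ℂ) • ((X i)⁺ ⊗ₖ τ i) - ∑ i, (p i : ℂ) • ((X i)⁻ ⊗ₖ τ i) := by
    rw [← Finset.sum_sub_distrib]
    refine Finset.sum_congr rfl fun i _ => ?_
    rw [← smul_sub, ← sub_kronecker, CFC.posPart_sub_negPart _ (hX i).isSelfAdjoint]
  have hτpos i := (hτ i).1
  have hposPart i := Matrix.nonneg_iff_posSemidef.mp (CFC.posPart_nonneg (X i))
  have hnegPart i := Matrix.nonneg_iff_posSemidef.mp (CFC.negPart_nonneg (X i))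
  calc traceNorm (∑ i, (p i : ℂ) • (X i ⊗ₖ τ i))
      ≤ ∑ i, p i * ((X i)⁺).trace.re + ∑ i, p i * ((X i)⁻).trace.re := by
        rw [hsplit, ← trace_re_sum_smul_kronecker p _ hτ, ← trace_re_sum_smul_kronecker p _ hτ]
        exact traceNorm_sub_le (posSemidef_sum_smul_kronecker hp hposPart hτpos)
          (posSemidef_sum_smul_kronecker hp hnegPart hτpos)
    _ = ∑ i, p i * traceNorm (X i) := by
        simp only [traceNorm_eq_trace_posPart_add_trace_negPart (hX _), mul_add,
          Finset.sum_add_distrib]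

end Kronecker

section Channel

variable {m k n : ℕ}

theorem tensorId_kronecker (Φ : Matrix (Fin m) (Fin m) ℂ →ₗ[ℂ] Matrix (Fin k) (Fin k) ℂ)
    (ρ : Matrix (Fin m) (Fin m) ℂ) (τ : Matrix (Fin n) (Fin n) ℂ) :
    tensorId n Φ (ρ ⊗ₖ τ) = Φ ρ ⊗ₖ τ := by
  ext p q
  show Φ (Matrix.of fun i j => (ρ ⊗ₖ τ) (i, p.2) (j, q.2)) p.1 q.1 = _
  have h : (Matrix.of fun i j => (ρ ⊗ₖ τ) (i, p.2) (j, q.2)) = τ p.2 q.2 • ρ := by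
    ext i j
    simp [mul_comm]
  rw [h, map_smul]
  simp [mul_comm]

theorem IsCompletelyPositive.isPositiveMap
    {Φ : Matrix (Fin m) (Fin m) ℂ →ₗ[ℂ] Matrix (Fin k) (Fin k) ℂ}
    (h : IsCompletelyPositive Φ) : IsPositiveMap Φ := by
  intro X hX
  exact (Matrix.posSemidef_submatrix_equiv (Equiv.prodUnique (Fin k) (Fin 1))).mp
    (h 1 (X.submatrix (Equiv.prodUnique _ _) (Equiv.prodUnique _ _)) (hX.submatrix _))

theorem traceNorm_sub_apply_le_two
    {Φ₀ Φ₁ : Matrix (Fin m) (Fin m) ℂ →ₗ[ℂ] Matrix (Fin k) (Fin k) ℂ}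
    (h₀ : IsChannel Φ₀) (h₁ : IsChannel Φ₁) {τ : Matrix (Fin m) (Fin m) ℂ} (hτ : IsState τ) :
    traceNorm (Φ₀ τ - Φ₁ τ) ≤ 2 := by
  have h := traceNorm_sub_le (h₀.1.isPositiveMap τ hτ.1) (h₁.1.isPositiveMap τ hτ.1)
  rw [h₀.2, h₁.2, hτ.2, Complex.one_re] at h
  linarith

end Channel

/-- Separable states give no advantage in channel discrimination: for channels
`Φ₀, Φ₁` and a separable bipartite state `σ`,
`‖((Φ₀ − Φ₁) ⊗ id_n)[σ]‖_tr ≤ sup { ‖Φ₀[τ] − Φ₁[τ]‖_tr : τ a state on ℂ^m }`. -/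
theorem separable_states_no_advantage
    {m k n : ℕ} (Φ₀ Φ₁ : Matrix (Fin m) (Fin m) ℂ →ₗ[ℂ] Matrix (Fin k) (Fin k) ℂ)
    (h₀ : IsChannel Φ₀) (h₁ : IsChannel Φ₁)
    (σ : Matrix (Fin m × Fin n) (Fin m × Fin n) ℂ) (hσ : IsSeparable σ) :
    traceNorm (tensorId n (Φ₀ - Φ₁) σ) ≤
      sSup {x : ℝ | ∃ τ : Matrix (Fin m) (Fin m) ℂ, IsState τ ∧
        x = traceNorm (Φ₀ τ - Φ₁ τ)} := by
  obtain ⟨N, p, ρ, τ, hp, hp_sum, hρ, hτ, rfl⟩ := hσ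
  set S := {x : ℝ | ∃ τ : Matrix (Fin m) (Fin m) ℂ, IsState τ ∧ x = traceNorm (Φ₀ τ - Φ₁ τ)}
  have hS : BddAbove S := ⟨2, by
    rintro _ ⟨τ, hτ, rfl⟩
    exact traceNorm_sub_apply_le_two h₀ h₁ hτ⟩
  have hHerm i : (Φ₀ (ρ i) - Φ₁ (ρ i)).IsHermitian :=
    (h₀.1.isPositiveMap _ (hρ i).1).1.sub (h₁.1.isPositiveMap _ (hρ i).1).1
  have himage : tensorId n (Φ₀ - Φ₁) (∑ i, (p i : ℂ) • (ρ i ⊗ₖ τ i)) =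
      ∑ i, (p i : ℂ) • ((Φ₀ (ρ i) - Φ₁ (ρ i)) ⊗ₖ τ i) := by
    simp only [map_sum, map_smul, tensorId_kronecker, LinearMap.sub_apply]
  calc traceNorm (tensorId n (Φ₀ - Φ₁) (∑ i, (p i : ℂ) • (ρ i ⊗ₖ τ i)))
      ≤ ∑ i, p i * traceNorm (Φ₀ (ρ i) - Φ₁ (ρ i)) := by
        rw [himage]
        exact traceNorm_sum_smul_kronecker_le hp hHerm hτ
    _ ≤ ∑ i, p i * sSup S := by
        gcongr with i
        · exact hp i
        · exact le_csSup hS ⟨ρ i, hρ i, rfl⟩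
    _ = sSup S := by rw [← Finset.sum_mul, hp_sum, one_mul]

end ChannelDiscrimination
end

section
/- Let Ω be a nonzero positive super-operator from m×m matrices to k×k matrices, and let λ = sup { Tr(Ω[τ]) : τ a state on ℂ^m } (a strictly positive real). Define the super-operator Φ from m×m matrices to (k+1)×(k+1) matrices by letting Φ[X] have the matrix Ω[X]/λ as its top-left k×k block, the scalar Tr(X) − Tr(Ω[X])/λ in the bottom-right corner entry, and zeros elsewhere. Then Φ is positive and trace-preserving, and for every bipartite state ρ on ℂ^m ⊗ ℂ^n, if (Ω ⊗ id_n)[ρ] is not positive semidefinite then (Φ ⊗ id_n)[ρ] is not positive semidefinite. -/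
open scoped Kronecker ComplexOrder Matrix

namespace Matrix

variable {n : Type*}

lemma posSemidef_of_smul_posSemidef {A : Matrix n n ℂ} {c : ℂ} (hc : 0 < c)
    (h : (c • A).PosSemidef) : A.PosSemidef := by
  simpa [smul_smul, inv_mul_cancel₀ hc.ne'] using h.smul (inv_pos.mpr hc).le

variable [Fintype n]

lemma PosSemidef.trace_eq_ofReal_re {A : Matrix n n ℂ} (hA : A.PosSemidef) :
    A.trace = A.trace.re :=
  Complex.eq_re_of_ofReal_le (Complex.ofReal_zero ▸ hA.trace_nonneg)

variable [DecidableEq n]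

open scoped MatrixOrder in
lemma PosSemidef.posSemidef_trace_smul_one_sub {A : Matrix n n ℂ} (hA : A.PosSemidef) :
    (A.trace • 1 - A).PosSemidef := by
  have hspec : ∀ x ∈ spectrum ℝ A, x ≤ A.trace.re := by
    rintro _ hx
    obtain ⟨i, rfl⟩ := hA.1.spectrum_real_eq_range_eigenvalues ▸ hx
    rw [hA.1.trace_eq_sum_eigenvalues, Complex.re_sum]
    simpa using Finset.single_le_sum (fun j _ => hA.eigenvalues_nonneg j) (Finset.mem_univ i)
  have := le_algebraMap_of_spectrum_le hspec hA.1
  rwa [Algebra.algebraMap_eq_smul_one, ← Complex.coe_smul, ← hA.trace_eq_ofReal_re,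
    le_iff] at this

open scoped MatrixOrder Matrix.Norms.L2Operator in
lemma exists_posSemidef_apply_ne_zero {M : Type*} [AddCommGroup M] [Module ℂ M]
    {f : Matrix n n ℂ →ₗ[ℂ] M} (hf : f ≠ 0) : ∃ P, P.PosSemidef ∧ f P ≠ 0 := by
  by_contra! h
  exact hf <| LinearMap.ext_on CStarAlgebra.span_nonneg fun P hP =>
    h P (nonneg_iff_posSemidef.mp hP)

end Matrix

namespace ChannelDiscrimination

open Matrix

lemma isState_trace_inv_smul {ι : Type*} [Fintype ι] {P : Matrix ι ι ℂ} (hP : P.PosSemidef)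
    (hP₀ : P ≠ 0) : IsState (P.trace⁻¹ • P) := by
  have htr : P.trace ≠ 0 := fun h => hP₀ (hP.trace_eq_zero_iff.mp h)
  exact ⟨hP.smul (inv_nonneg.mpr hP.trace_nonneg),
    by rw [trace_smul, smul_eq_mul, inv_mul_cancel₀ htr]⟩

section Pad

variable {k : ℕ}

lemma submatrix_castSucc_pad1 (M : Matrix (Fin k) (Fin k) ℂ) (c : ℂ) :
    (pad1 M c).submatrix Fin.castSucc Fin.castSucc = M := by
  ext i j
  simp [pad1]

lemma trace_pad1 (M : Matrix (Fin k) (Fin k) ℂ) (c : ℂ) : (pad1 M c).trace = M.trace + c := by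
  simp [Matrix.trace, Fin.sum_univ_castSucc, pad1]

lemma conjTranspose_pad1 (M : Matrix (Fin k) (Fin k) ℂ) (c : ℂ) :
    (pad1 M c)ᴴ = pad1 Mᴴ (star c) := by
  ext a b
  induction a using Fin.lastCases <;> induction b using Fin.lastCases <;> simp [pad1]

lemma dotProduct_pad1_mulVec (M : Matrix (Fin k) (Fin k) ℂ) (c : ℂ) (x : Fin (k + 1) → ℂ) :
    star x ⬝ᵥ (pad1 M c *ᵥ x) = star (x ∘ Fin.castSucc) ⬝ᵥ (M *ᵥ (x ∘ Fin.castSucc)) +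
      star (x (Fin.last k)) * c * x (Fin.last k) := by
  simp [dotProduct, mulVec, Fin.sum_univ_castSucc, pad1, mul_assoc]

lemma posSemidef_pad1 {M : Matrix (Fin k) (Fin k) ℂ} (hM : M.PosSemidef) {c : ℂ} (hc : 0 ≤ c) :
    (pad1 M c).PosSemidef := by
  refine .of_dotProduct_mulVec_nonneg ?_ fun x => ?_
  · rw [IsHermitian, conjTranspose_pad1, hM.1.eq, (IsSelfAdjoint.of_nonneg hc).star_eq]
  · rw [dotProduct_pad1_mulVec, mul_comm _ c, mul_assoc]
    exact add_nonneg (hM.dotProduct_mulVec_nonneg _) (mul_nonneg hc (star_mul_self_nonneg _))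

end Pad

lemma submatrix_tensorId {m k k' n : ℕ} (e : Fin k → Fin k')
    {Φ : Matrix (Fin m) (Fin m) ℂ →ₗ[ℂ] Matrix (Fin k') (Fin k') ℂ}
    {Ψ : Matrix (Fin m) (Fin m) ℂ →ₗ[ℂ] Matrix (Fin k) (Fin k) ℂ}
    (h : ∀ X, (Φ X).submatrix e e = Ψ X) (ρ : Matrix (Fin m × Fin n) (Fin m × Fin n) ℂ) :
    (tensorId n Φ ρ).submatrix (Prod.map e id) (Prod.map e id) = tensorId n Ψ ρ := by
  ext p q
  exact congrFun (congrFun (h _) p.1) q.1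

lemma tensorId_smul {m k n : ℕ} (c : ℂ)
    (Φ : Matrix (Fin m) (Fin m) ℂ →ₗ[ℂ] Matrix (Fin k) (Fin k) ℂ)
    (ρ : Matrix (Fin m × Fin n) (Fin m × Fin n) ℂ) :
    tensorId n (c • Φ) ρ = c • tensorId n Φ ρ :=
  rfl

section PositiveMap

variable {m k : ℕ}

def stateOutputTraces (Ω : Matrix (Fin m) (Fin m) ℂ →ₗ[ℂ] Matrix (Fin k) (Fin k) ℂ) : Set ℝ :=
  {x : ℝ | ∃ τ : Matrix (Fin m) (Fin m) ℂ, IsState τ ∧ (x : ℂ) = (Ω τ).trace}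

variable {Ω : Matrix (Fin m) (Fin m) ℂ →ₗ[ℂ] Matrix (Fin k) (Fin k) ℂ}

lemma IsPositiveMap.trace_apply_le_trace_apply_one (hΩ : IsPositiveMap Ω)
    {τ : Matrix (Fin m) (Fin m) ℂ} (hτ : IsState τ) : (Ω τ).trace ≤ (Ω 1).trace := by
  have := (hΩ _ hτ.1.posSemidef_trace_smul_one_sub).trace_nonneg
  rwa [hτ.2, one_smul, map_sub, trace_sub, sub_nonneg] at this

lemma IsPositiveMap.bddAbove_stateOutputTraces (hΩ : IsPositiveMap Ω) :
    BddAbove (stateOutputTraces Ω) := by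
  refine ⟨(Ω 1).trace.re, fun x ⟨τ, hτ, hx⟩ => ?_⟩
  simpa [← hx] using Complex.re_le_re (hΩ.trace_apply_le_trace_apply_one hτ)

lemma IsPositiveMap.trace_apply_le_sSup (hΩ : IsPositiveMap Ω) {τ : Matrix (Fin m) (Fin m) ℂ}
    (hτ : IsState τ) : (Ω τ).trace ≤ ((sSup (stateOutputTraces Ω) : ℝ) : ℂ) := by
  have hre := (hΩ τ hτ.1).trace_eq_ofReal_re
  rw [hre]
  exact_mod_cast le_csSup hΩ.bddAbove_stateOutputTraces ⟨τ, hτ, hre.symm⟩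

lemma IsPositiveMap.trace_apply_le_sSup_mul_trace (hΩ : IsPositiveMap Ω)
    {X : Matrix (Fin m) (Fin m) ℂ} (hX : X.PosSemidef) :
    (Ω X).trace ≤ ((sSup (stateOutputTraces Ω) : ℝ) : ℂ) * X.trace := by
  obtain rfl | hX₀ := eq_or_ne X 0
  · simp
  have htr : X.trace ≠ 0 := fun h => hX₀ (hX.trace_eq_zero_iff.mp h)
  calc (Ω X).trace = X.trace * (Ω (X.trace⁻¹ • X)).trace := by
        rw [map_smul, trace_smul, smul_eq_mul, mul_inv_cancel_left₀ htr]
    _ ≤ X.trace * sSup (stateOutputTraces Ω) :=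
        mul_le_mul_of_nonneg_left (hΩ.trace_apply_le_sSup (isState_trace_inv_smul hX hX₀))
          hX.trace_nonneg
    _ = _ := mul_comm _ _

lemma IsPositiveMap.sSup_stateOutputTraces_pos (hΩ : IsPositiveMap Ω) (hΩ₀ : Ω ≠ 0) :
    0 < sSup (stateOutputTraces Ω) := by
  obtain ⟨P, hP, hΩP⟩ := exists_posSemidef_apply_ne_zero hΩ₀
  have hP₀ : P ≠ 0 := by rintro rfl; exact hΩP (map_zero Ω)
  have hτ := isState_trace_inv_smul hP hP₀
  have hΩτ : Ω (P.trace⁻¹ • P) ≠ 0 := by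
    rw [map_smul]
    exact smul_ne_zero (inv_ne_zero fun h => hP₀ (hP.trace_eq_zero_iff.mp h)) hΩP
  have htr_pos : 0 < (Ω (P.trace⁻¹ • P)).trace :=
    (hΩ _ hτ.1).trace_nonneg.lt_of_ne fun h => hΩτ ((hΩ _ hτ.1).trace_eq_zero_iff.mp h.symm)
  exact_mod_cast htr_pos.trans_le (hΩ.trace_apply_le_sSup hτ)

end PositiveMap

/-- From a nonzero positive super-operator `Ω` one obtains a positive trace-preserving
super-operator `Φ[X] = pad1 (Ω[X]/λ) (Tr X − Tr(Ω[X])/λ)` (with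
`λ = sup {Tr(Ω[τ]) : τ a state}` strictly positive) detecting at least the same
states as `Ω`. -/
theorem positive_map_upgrades_to_positive_trace_preserving
    {m k : ℕ} (Ω : Matrix (Fin m) (Fin m) ℂ →ₗ[ℂ] Matrix (Fin k) (Fin k) ℂ)
    (hΩpos : IsPositiveMap Ω) (hΩne : Ω ≠ 0)
    (lam : ℝ)
    (hlam : lam = sSup {x : ℝ | ∃ τ : Matrix (Fin m) (Fin m) ℂ, IsState τ ∧
      (x : ℂ) = (Ω τ).trace})
    (Φ : Matrix (Fin m) (Fin m) ℂ →ₗ[ℂ] Matrix (Fin (k + 1)) (Fin (k + 1)) ℂ)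
    (hΦ : ∀ X : Matrix (Fin m) (Fin m) ℂ,
      Φ X = pad1 ((lam : ℂ)⁻¹ • Ω X) (X.trace - (Ω X).trace / (lam : ℂ))) :
    0 < lam ∧ IsPositiveMap Φ ∧ IsTracePreserving Φ ∧
      ∀ (n : ℕ) (ρ : Matrix (Fin m × Fin n) (Fin m × Fin n) ℂ), IsState ρ →
        ¬ (tensorId n Ω ρ).PosSemidef → ¬ (tensorId n Φ ρ).PosSemidef := by
  have hpos : 0 < lam := by
    rw [hlam]
    exact hΩpos.sSup_stateOutputTraces_pos hΩne
  have hle : ∀ X, X.PosSemidef → (Ω X).trace ≤ lam * X.trace := by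
    rw [hlam]
    exact fun X hX => hΩpos.trace_apply_le_sSup_mul_trace hX
  have hlamC : 0 < (lam : ℂ) := Complex.zero_lt_real.mpr hpos
  refine ⟨hpos, fun X hX => ?_, fun X => ?_, fun n ρ _ hΩρ hΦρ => hΩρ ?_⟩
  · rw [hΦ]
    refine posSemidef_pad1 ((hΩpos X hX).smul (inv_pos.mpr hlamC).le) (sub_nonneg.mpr ?_)
    rw [div_le_iff₀ hlamC, mul_comm]
    exact hle X hX
  · rw [hΦ, trace_pad1, trace_smul, smul_eq_mul]
    field_simp
    ring
  · have hsub : ∀ X, (Φ X).submatrix Fin.castSucc Fin.castSucc = ((lam : ℂ)⁻¹ • Ω) X := by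
      intro X
      rw [hΦ, submatrix_castSucc_pad1, LinearMap.smul_apply]
    have := hΦρ.submatrix (Prod.map Fin.castSucc id)
    rw [submatrix_tensorId _ hsub, tensorId_smul] at this
    exact posSemidef_of_smul_posSemidef (inv_pos.mpr hlamC) this

end ChannelDiscrimination
end
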